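/- Let F be a field of characteristic 2. In the Witt K-theory K^W_*(F) := K^MW_*(F)/(h), for all a, b ∈ F^× with a + b ≠ 0, the classes ⟦a⟧ satisfy: ⟦a²b⟧ = ⟦b⟧, ⟦a⟧ + ⟦-a⟧ = ⟦1⟧ + ⟦-1⟧, and ⟦a⟧ + ⟦b⟧ = ⟦a+b⟧ + ⟦ab(a+b)⟧. -/

import Mathlib

noncomputable section

/-- Generators of the Milnor–Witt K-theory ring: a symbol `[u]` for each unit `u`
and the element `η`. -/
inductive MWGen (F : Type) [Field F] : Type
  | of : Fˣ → MWGen F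
  | eta : MWGen F

/-- The defining relations KMW1–KMW4 of Milnor–Witt K-theory, imposed on the free
(noncommutative) ℤ-algebra on the generators. -/
inductive MWRel (F : Type) [Field F] :
    FreeAlgebra ℤ (MWGen F) → FreeAlgebra ℤ (MWGen F) → Prop
  | steinberg (a : Fˣ) (h1 : (a : F) ≠ 1) :
      MWRel F
        (FreeAlgebra.ι ℤ (MWGen.of a) *
          FreeAlgebra.ι ℤ (MWGen.of (Units.mk0 (1 - (a : F)) (sub_ne_zero_of_ne h1.symm))))
        0
  | mul_rel (a b : Fˣ) :
      MWRel F (FreeAlgebra.ι ℤ (MWGen.of (a * b)))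
        (FreeAlgebra.ι ℤ (MWGen.of a) + FreeAlgebra.ι ℤ (MWGen.of b) +
          FreeAlgebra.ι ℤ MWGen.eta * FreeAlgebra.ι ℤ (MWGen.of a) *
            FreeAlgebra.ι ℤ (MWGen.of b))
  | comm_rel (u : Fˣ) :
      MWRel F (FreeAlgebra.ι ℤ MWGen.eta * FreeAlgebra.ι ℤ (MWGen.of u))
        (FreeAlgebra.ι ℤ (MWGen.of u) * FreeAlgebra.ι ℤ MWGen.eta)
  | hyp :
      MWRel F
        (FreeAlgebra.ι ℤ MWGen.eta *
          (FreeAlgebra.ι ℤ MWGen.eta * FreeAlgebra.ι ℤ (MWGen.of (-1)) + 2))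
        0

/-- The Milnor–Witt K-theory ring `K^MW_*(F)` (all degrees together). -/
def KMW (F : Type) [Field F] : Type := RingQuot (MWRel F)

instance (F : Type) [Field F] : Ring (KMW F) := inferInstanceAs (Ring (RingQuot (MWRel F)))

/-- The symbol `[u] ∈ K^MW_1(F)`. -/
def mw {F : Type} [Field F] (u : Fˣ) : KMW F :=
  RingQuot.mkRingHom (MWRel F) (FreeAlgebra.ι ℤ (MWGen.of u))

/-- The element `η ∈ K^MW_{-1}(F)`. -/
def mweta (F : Type) [Field F] : KMW F :=
  RingQuot.mkRingHom (MWRel F) (FreeAlgebra.ι ℤ MWGen.eta)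

/-- The degree-`n` homogeneous component of `K^MW_*(F)`: the additive subgroup spanned
by the monomials `η^m [u₁]⋯[u_r]` with `r - m = n`. -/
def KMWcomp (F : Type) [Field F] (n : ℤ) : AddSubgroup (KMW F) :=
  AddSubgroup.closure {x | ∃ (m r : ℕ) (v : Fin r → Fˣ),
    (r : ℤ) - (m : ℤ) = n ∧ x = (mweta F) ^ m * (List.ofFn fun i => mw (v i)).prod}

/-- The hyperbolic element `h = η[-1] + 2 ∈ K^MW_0(F)`. -/
def hKMW (F : Type) [Field F] : KMW F := mweta F * mw (-1) + 2

/-- Witt K-theory `K^W_*(F) := K^MW_*(F)/(h)`. -/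
def KW (F : Type) [Field F] : Type :=
  RingQuot (fun x y : KMW F => x = hKMW F ∧ y = 0)

instance (F : Type) [Field F] : Ring (KW F) :=
  inferInstanceAs (Ring (RingQuot (fun x y : KMW F => x = hKMW F ∧ y = 0)))

/-- The quotient map `K^MW_*(F) → K^W_*(F)`. -/
def kwq (F : Type) [Field F] : KMW F →+* KW F :=
  RingQuot.mkRingHom (fun x y : KMW F => x = hKMW F ∧ y = 0)

/-- The class `⟦a⟧ ∈ K^W_1(F)` of the symbol `[a]`. -/
def kw {F : Type} [Field F] (a : Fˣ) : KW F := kwq F (mw a)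

/-- The degree-`n` homogeneous component of `K^W_*(F)`. -/
def KWcomp (F : Type) [Field F] (n : ℤ) : AddSubgroup (KW F) :=
  AddSubgroup.map (kwq F).toAddMonoidHom (KMWcomp F n)


/-! In characteristic 2 we have `-1 = 1`, so `h = 0` forces `η[1] = -2`; together with
`[1] = [1] + [1] + η[1][1]` this gives `[1] = 0` and `2 = 0` in `K^W_*(F)`. The classical
Milnor–Witt identity `[u][-u] = 0`, from `-u = (1 - u)/(1 - u⁻¹)` and the Steinberg relation,
then reads `[u][u] = 0`, so `[a²] = 2[a] + η[a][a] = 0`, which gives the first two identities.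
For the third, put `s = a + b`, `x = a/s`, `y = b/s`: since `x + y = 1`, the Steinberg relation
makes `[xy] = [x] + [y]`, and expanding `[a] = [xs]`, `[b] = [ys]` and
`[abs] = [xy · s² · s]` yields the claim. -/

theorem CharTwo.units_neg_eq {F : Type} [Field F] [CharP F 2] (u : Fˣ) : -u = u :=
  Units.ext (CharTwo.neg_eq (u : F))

namespace KMW

variable {F : Type} [Field F]

theorem mw_mul (u v : Fˣ) : mw (u * v) = mw u + mw v + mweta F * mw u * mw v := by
  have h := RingQuot.mkRingHom_rel (MWRel.mul_rel u v)
  simp only [map_add, map_mul] at h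
  exact h

theorem mweta_mul_comm (u : Fˣ) : mweta F * mw u = mw u * mweta F := by
  have h := RingQuot.mkRingHom_rel (MWRel.comm_rel (F := F) u)
  simp only [map_mul] at h
  exact h

theorem mw_mul_mw_one_sub (a : Fˣ) (ha : (a : F) ≠ 1) :
    mw a * mw (Units.mk0 (1 - (a : F)) (sub_ne_zero_of_ne ha.symm)) = 0 := by
  have h := RingQuot.mkRingHom_rel (MWRel.steinberg a ha)
  simp only [map_mul, map_zero] at h
  exact h

end KMW

namespace KW

open KMW

variable {F : Type} [Field F]

def kweta (F : Type) [Field F] : KW F := kwq F (mweta F)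

theorem kw_mul (u v : Fˣ) : kw (u * v) = kw u + kw v + kweta F * kw u * kw v := by
  simpa only [kw, kweta, map_add, map_mul] using congrArg (kwq F) (mw_mul u v)

theorem kweta_mul_comm (u : Fˣ) : kweta F * kw u = kw u * kweta F := by
  simpa only [kw, kweta, map_mul] using congrArg (kwq F) (mweta_mul_comm u)

theorem kw_mul_kw_eq_zero_of_add_eq_one (x y : Fˣ) (hxy : (x : F) + y = 1) :
    kw x * kw y = 0 := by
  have hx : (x : F) ≠ 1 := fun hx => y.ne_zero (add_eq_left.mp (hx ▸ hxy))
  have hy : y = Units.mk0 (1 - (x : F)) (sub_ne_zero_of_ne hx.symm) :=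
    Units.ext (eq_sub_of_add_eq' hxy)
  simpa only [kw, hy, map_mul, map_zero] using congrArg (kwq F) (mw_mul_mw_one_sub x hx)

theorem kweta_mul_kw_neg_one_add_two : kweta F * kw (-1 : Fˣ) + 2 = 0 := by
  have hh : kwq F (hKMW F) = kwq F 0 := RingQuot.mkRingHom_rel ⟨rfl, rfl⟩
  simpa only [hKMW, kw, kweta, map_add, map_mul, map_ofNat, map_zero] using hh

theorem kw_mul_kw_mul (u v w : Fˣ) :
    kw u * kw (v * w) = kw u * kw v + kw u * kw w + kweta F * (kw u * kw v) * kw w := by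
  simp only [kw_mul, mul_add, ← mul_assoc, ← kweta_mul_comm]

theorem kw_mul_kw_mul_eq_zero {u v w : Fˣ} (hv : kw u * kw v = 0) (hw : kw u * kw w = 0) :
    kw u * kw (v * w) = 0 := by
  rw [kw_mul_kw_mul, hv, hw, mul_zero, zero_mul, add_zero, add_zero]

section CharTwo

variable [CharP F 2]

theorem kw_one : kw (1 : Fˣ) = 0 := by
  have h2 : kweta F * kw (1 : Fˣ) = -2 := by
    have h := eq_neg_of_add_eq_zero_left (kweta_mul_kw_neg_one_add_two (F := F))
    rwa [CharTwo.units_neg_eq] at h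
  have h := kw_mul (1 : Fˣ) 1
  rw [one_mul, h2, neg_mul, two_mul] at h
  simpa using h

theorem two_eq_zero : (2 : KW F) = 0 := by
  have h := kweta_mul_kw_neg_one_add_two (F := F)
  rwa [CharTwo.units_neg_eq, kw_one, mul_zero, zero_add] at h

theorem kw_mul_kw_inv_eq_zero {u v : Fˣ} (h : kw u * kw v = 0) : kw u * kw v⁻¹ = 0 := by
  have h1 := kw_mul_kw_mul u v v⁻¹
  rwa [mul_inv_cancel, kw_one, mul_zero, h, mul_zero, zero_mul, zero_add, add_zero,
    eq_comm] at h1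

theorem kw_mul_eq_zero_of_kw_inv_mul_eq_zero {u : Fˣ} {z : KW F} (h : kw u⁻¹ * z = 0) :
    kw u * z = 0 := by
  have h1 := congrArg (· * z) (kw_mul u u⁻¹)
  simp only [mul_inv_cancel, kw_one, zero_mul, add_mul, mul_assoc, h, mul_zero,
    add_zero] at h1
  exact h1.symm

theorem kw_mul_kw_neg_self (u : Fˣ) : kw u * kw (-u) = 0 := by
  by_cases hu : (u : F) = 1
  · rw [(Units.ext hu : u = 1), kw_one, zero_mul]
  have hu' : ((u⁻¹ : Fˣ) : F) ≠ 1 := by simpa using hu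
  set U := Units.mk0 (1 - (u : F)) (sub_ne_zero_of_ne (Ne.symm hu))
  set D := Units.mk0 (1 - ((u⁻¹ : Fˣ) : F)) (sub_ne_zero_of_ne hu'.symm)
  have hUD : -u = U * D⁻¹ := by
    have hu0 := u.ne_zero
    have hu1 : (1 : F) - u ≠ 0 := sub_ne_zero_of_ne (Ne.symm hu)
    ext
    simp only [U, D, Units.val_neg, Units.val_mul, Units.val_inv_eq_inv_val, Units.val_mk0]
    field_simp
    ring
  have hU : kw u * kw U = 0 := kw_mul_kw_eq_zero_of_add_eq_one u U (by simp [U])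
  have hD : kw u * kw D = 0 :=
    kw_mul_eq_zero_of_kw_inv_mul_eq_zero (kw_mul_kw_eq_zero_of_add_eq_one _ D (by simp [D]))
  rw [hUD]
  exact kw_mul_kw_mul_eq_zero hU (kw_mul_kw_inv_eq_zero hD)

theorem kw_mul_self (u : Fˣ) : kw (u * u) = 0 := by
  have huu : kw u * kw u = 0 := by simpa only [CharTwo.units_neg_eq] using kw_mul_kw_neg_self u
  rw [kw_mul, mul_assoc, huu, mul_zero, add_zero, ← two_mul, two_eq_zero, zero_mul]

theorem kw_sq_mul (a b : Fˣ) : kw (a ^ 2 * b) = kw b := by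
  rw [pow_two, kw_mul, kw_mul_self, zero_add, mul_zero, zero_mul, add_zero]

theorem kw_add_kw (a b : Fˣ) (h : (a : F) + b ≠ 0) :
    kw a + kw b = kw (Units.mk0 ((a : F) + b) h) + kw (a * b * Units.mk0 ((a : F) + b) h) := by
  set s := Units.mk0 ((a : F) + b) h
  set x := a * s⁻¹
  set y := b * s⁻¹
  have hxy : kw (x * y) = kw x + kw y := by
    have h0 : kw x * kw y = 0 := kw_mul_kw_eq_zero_of_add_eq_one x y <| by
      simp only [x, y, s, Units.val_mul, Units.val_inv_eq_inv_val, Units.val_mk0]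
      field_simp
    rw [kw_mul, mul_assoc, h0, mul_zero, add_zero]
  have hx : a = x * s := (inv_mul_cancel_right a s).symm
  have hy : b = y * s := (inv_mul_cancel_right b s).symm
  clear_value x y
  have habs : a * b * s = x * y * (s ^ 2 * s) := by
    rw [hx, hy]
    ext
    simp only [Units.val_mul, Units.val_pow_eq_pow_val]
    ring
  rw [habs, kw_mul, hxy, kw_sq_mul, hx, hy, kw_mul x s, kw_mul y s]
  noncomm_ring

end CharTwo

end KW

theorem stmt17 (F : Type) [Field F] [CharP F 2] (a b : Fˣ)
    (h : (a : F) + (b : F) ≠ 0) :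
    kw (a ^ 2 * b) = kw b ∧
    kw a + kw (-a) = kw (1 : Fˣ) + kw (-1 : Fˣ) ∧
    kw a + kw b =
      kw (Units.mk0 ((a : F) + (b : F)) h) +
        kw (a * b * Units.mk0 ((a : F) + (b : F)) h) := by
  refine ⟨KW.kw_sq_mul a b, ?_, KW.kw_add_kw a b h⟩
  rw [CharTwo.units_neg_eq, CharTwo.units_neg_eq, KW.kw_one, ← two_mul, KW.two_eq_zero, zero_mul,
    add_zero]
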